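/- arXiv:2102.02187 — 2 statements merged into one kernel-verified Lean document; each statement's English description precedes it below -/
import Mathlib

section
/- (Coefficient bounds for the two-sender twirl.) Let d₁, d₂ be integers with 2 ≤ d₁ ≤ d₂, and let w: {0,1}² → ℝ≥0 satisfy w_b / d_i ≤ w_{b⊕e_i} ≤ d_i · w_b for every b ∈ {0,1}² and i ∈ {1,2}, where e_i flips the i-th bit (associate d₁ with the first bit and d₂ with the second). If (α₀₀, α₀₁, α₁₀, α₁₁) solves the linear system d₁d₂·([[d₂,1],[1,d₂]] ⊗ [[d₁,1],[1,d₁]])·(α₀₀,α₀₁,α₁₀,α₁₁)ᵀ = d₁²d₂²·(w₀₀, w₀₁, w₁₀, w₁₁)ᵀ, then α_b ≤ (d₂²/(d₂²−1))·w_b for every b ∈ {0,1}². -/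
open scoped Kronecker ComplexOrder
open MeasureTheory Matrix

noncomputable section

namespace QIT

section UnitaryTopology

variable (n : Type*) [Fintype n] [DecidableEq n]

instance : MeasurableSpace (Matrix.unitaryGroup n ℂ) := borel _
instance : BorelSpace (Matrix.unitaryGroup n ℂ) := ⟨rfl⟩

instance : IsTopologicalGroup (Matrix.unitaryGroup n ℂ) where
  continuous_mul := by
    apply Continuous.subtype_mk
    exact Continuous.matrix_mul (continuous_subtype_val.comp continuous_fst)
      (continuous_subtype_val.comp continuous_snd)
  continuous_inv := by
    have h : Continuous fun U : Matrix.unitaryGroup n ℂ => star U :=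
      Continuous.subtype_mk (continuous_star.comp continuous_subtype_val) _
    simpa [← Unitary.star_eq_inv] using h

instance : CompactSpace (Matrix.unitaryGroup n ℂ) := by
  apply isCompact_iff_compactSpace.mp
  have hclosed : IsClosed ((Matrix.unitaryGroup n ℂ : Set (Matrix n n ℂ))) := by
    have h1 : IsClosed {M : Matrix n n ℂ | star M * M = 1} :=
      isClosed_eq (Continuous.matrix_mul continuous_star continuous_id) continuous_const
    have h2 : IsClosed {M : Matrix n n ℂ | M * star M = 1} :=
      isClosed_eq (Continuous.matrix_mul continuous_id continuous_star) continuous_const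
    have heq : (Matrix.unitaryGroup n ℂ : Set (Matrix n n ℂ))
        = {M | star M * M = 1} ∩ {M | M * star M = 1} := by
      ext M; exact Unitary.mem_iff
    rw [heq]; exact h1.inter h2
  have hsub : (Matrix.unitaryGroup n ℂ : Set (Matrix n n ℂ)) ⊆
      Set.univ.pi fun _ : n => Set.univ.pi fun _ : n => Metric.closedBall (0 : ℂ) 1 := by
    intro U hU i _ j _
    rw [Metric.mem_closedBall, dist_zero_right]
    exact entry_norm_bound_of_unitary hU i j
  exact IsCompact.of_isClosed_subset
    (isCompact_univ_pi fun _ => isCompact_univ_pi fun _ => isCompact_closedBall _ _)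
    hclosed hsub

/-- The Haar probability measure on the unitary group. -/
def haarU : Measure (Matrix.unitaryGroup n ℂ) :=
  Measure.haarMeasure ⟨⟨Set.univ, isCompact_univ⟩, by simp⟩

end UnitaryTopology


section Defs

/-- Entrywise (Bochner) integral of a matrix-valued function. -/
def mInt {G : Type*} [MeasurableSpace G] (mu : Measure G) {m : Type*}
    (f : G → Matrix m m ℂ) : Matrix m m ℂ :=
  fun i j => ∫ U, f U i j ∂mu

/-- Partial trace over the first tensor factor. -/
def ptL {A B : Type*} [Fintype A] (M : Matrix (A × B) (A × B) ℂ) : Matrix B B ℂ :=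
  fun i j => ∑ a, M (a, i) (a, j)

/-- Partial trace over the second tensor factor. -/
def ptR {A B : Type*} [Fintype B] (M : Matrix (A × B) (A × B) ℂ) : Matrix A A ℂ :=
  fun i j => ∑ b, M (i, b) (j, b)

/-- Extension `T ⊗ id` of a superoperator to an additional tensor factor. -/
def matExt {A E R : Type*} (T : Matrix A A ℂ → Matrix E E ℂ)
    (M : Matrix (A × R) (A × R) ℂ) : Matrix (E × R) (E × R) ℂ :=
  fun p q => T (fun a b => M (a, p.2) (b, q.2)) p.1 q.1

/-- Linearity of a superoperator. -/
def IsLinMap {A E : Type*} (T : Matrix A A ℂ → Matrix E E ℂ) : Prop :=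
  ∀ (c : ℂ) (M N : Matrix A A ℂ), T (c • M + N) = c • T M + T N

/-- Complete positivity of a superoperator: it is linear and all its extensions by
finite-dimensional identities preserve positive semidefiniteness. -/
def IsCPMap {A E : Type*} [Fintype A] [Fintype E] (T : Matrix A A ℂ → Matrix E E ℂ) : Prop :=
  IsLinMap T ∧ ∀ (n : ℕ) (M : Matrix (A × Fin n) (A × Fin n) ℂ),
    M.PosSemidef → (matExt T M).PosSemidef

/-- Trace preservation. -/
def IsTPMap {A E : Type*} [Fintype A] [Fintype E] (T : Matrix A A ℂ → Matrix E E ℂ) : Prop :=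
  ∀ M : Matrix A A ℂ, (T M).trace = M.trace

/-- Spectral (Moore–Penrose) real power of a Hermitian matrix: the eigenvalue `λ` is mapped to
`λ ^ r` if `λ ≠ 0`, and to `0` otherwise.  Junk value `0` on non-Hermitian input. -/
def mpow {n : Type*} [Fintype n] [DecidableEq n] (M : Matrix n n ℂ) (r : ℝ) : Matrix n n ℂ :=
  if h : M.IsHermitian then
    (h.eigenvectorUnitary : Matrix n n ℂ) *
      Matrix.diagonal (fun i =>
        Complex.ofReal (if h.eigenvalues i = 0 then (0 : ℝ) else h.eigenvalues i ^ r)) *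
      star (h.eigenvectorUnitary : Matrix n n ℂ)
  else 0

/-- `ρ_δ`: the matrix obtained from a Hermitian matrix by zeroing out a maximal set of
smallest eigenvalues whose sum is at most `δ` (ties between equal eigenvalues broken by a
fixed enumeration of the index type).  Junk value `0` on non-Hermitian input. -/
def dTrunc {n : Type*} [Fintype n] [DecidableEq n] (M : Matrix n n ℂ) (δ : ℝ) :
    Matrix n n ℂ :=
  if h : M.IsHermitian then
    (h.eigenvectorUnitary : Matrix n n ℂ) *
      Matrix.diagonal (fun i =>
        if (∑ j ∈ Finset.univ.filter (fun j =>
              h.eigenvalues j < h.eigenvalues i ∨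
                (h.eigenvalues j = h.eigenvalues i ∧
                  Fintype.equivFin n j ≤ Fintype.equivFin n i)), h.eigenvalues j) ≤ δ
        then (0 : ℂ) else (h.eigenvalues i : ℂ)) *
      star (h.eigenvectorUnitary : Matrix n n ℂ)
  else 0

/-- Squared Schatten 2-norm `‖M‖₂² = Tr[MᴴM]`. -/
def sn2sq {n : Type*} [Fintype n] (M : Matrix n n ℂ) : ℝ := (Matrix.trace (Mᴴ * M)).re

/-- Trace norm `‖M‖₁ = Tr √(MᴴM)`. -/
def traceNorm {n : Type*} [Fintype n] [DecidableEq n] (M : Matrix n n ℂ) : ℝ :=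
  (Matrix.trace (mpow (Mᴴ * M) (1 / 2))).re

/-- The conditioned state `(I ⊗ (ρ^B_δ)^{-1/4}) ρ^{AB} (I ⊗ (ρ^B_δ)^{-1/4})`. -/
def tildeCond {A B : Type*} [Fintype A] [DecidableEq A] [Fintype B] [DecidableEq B]
    (ρ : Matrix (A × B) (A × B) ℂ) (δ : ℝ) : Matrix (A × B) (A × B) ℂ :=
  ((1 : Matrix A A ℂ) ⊗ₖ mpow (dTrunc (ptL ρ) δ) (-(1 / 4))) * ρ *
    ((1 : Matrix A A ℂ) ⊗ₖ mpow (dTrunc (ptL ρ) δ) (-(1 / 4)))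

/-- The δ-tilde conditional 2-entropy `H̃_{2,δ}(A|B)_ρ` of a state on `A ⊗ B`
(conditioning on the second factor). -/
def tildeH2 {A B : Type*} [Fintype A] [DecidableEq A] [Fintype B] [DecidableEq B]
    (ρ : Matrix (A × B) (A × B) ℂ) (δ : ℝ) : ℝ :=
  - Real.logb 2 ((Matrix.trace (tildeCond ρ δ * tildeCond ρ δ)).re)

/-- The unconditional tilde 2-entropy `H̃_2(A)_σ = -log Tr[σ²]`. -/
def h2un {A : Type*} [Fintype A] (σ : Matrix A A ℂ) : ℝ :=
  - Real.logb 2 ((Matrix.trace (σ * σ)).re)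

/-- The max entropy `H_max(A)_σ = 2 log Tr[√σ]`. -/
def hMax {A : Type*} [Fintype A] [DecidableEq A] (σ : Matrix A A ℂ) : ℝ :=
  2 * Real.logb 2 ((Matrix.trace (mpow σ (1 / 2))).re)

/-- The maximally entangled state `Φ^{AA'}`. -/
def maxEnt (A : Type*) [Fintype A] [DecidableEq A] : Matrix (A × A) (A × A) ℂ :=
  fun p q => if p.1 = p.2 ∧ q.1 = q.2 then (Fintype.card A : ℂ)⁻¹ else 0

/-- The swap operator `F^{AA'}`. -/
def swapOp (A : Type*) [DecidableEq A] : Matrix (A × A) (A × A) ℂ :=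
  fun p q => if p.1 = q.2 ∧ p.2 = q.1 then 1 else 0

/-- The Choi state of a superoperator, on `A ⊗ E`. -/
def choi {A E : Type*} [Fintype A] [DecidableEq A]
    (T : Matrix A A ℂ → Matrix E E ℂ) : Matrix (A × E) (A × E) ℂ :=
  fun p q => (Fintype.card A : ℂ)⁻¹ * T (Matrix.single p.1 q.1 1) p.2 q.2

/-- A (mixed) quantum state. -/
def IsState {A : Type*} [Fintype A] (ρ : Matrix A A ℂ) : Prop :=
  ρ.PosSemidef ∧ ρ.trace = 1

/-- A pure quantum state (rank-one projection). -/
def IsPureState {A : Type*} [Fintype A] (ψ : Matrix A A ℂ) : Prop :=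
  ψ.PosSemidef ∧ ψ * ψ = ψ ∧ ψ.trace = 1


/-- The Haar measure on the unitary group is a probability measure. -/
instance {n : Type*} [Fintype n] [DecidableEq n] : IsProbabilityMeasure (haarU n) :=
  ⟨Measure.haarMeasure_self⟩

/-- marginal over the middle factor: `((X × Y) × Z) ↦ (X × Z)`. -/
def m13 {X Y Z : Type*} [Fintype Y] (M : Matrix ((X × Y) × Z) ((X × Y) × Z) ℂ) :
    Matrix (X × Z) (X × Z) ℂ :=
  fun p q => ∑ y, M ((p.1, y), p.2) ((q.1, y), q.2)

/-- marginal over the first of three factors: `((X × Y) × Z) ↦ (Y × Z)`. -/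
def m23 {X Y Z : Type*} [Fintype X] (M : Matrix ((X × Y) × Z) ((X × Y) × Z) ℂ) :
    Matrix (Y × Z) (Y × Z) ℂ :=
  fun p q => ∑ x, M ((x, p.1), p.2) ((x, q.1), q.2)

/-- marginal over the first component of the second factor:
`(X × (Y × Z)) ↦ (X × Z)`. -/
def m2of2 {X Y Z : Type*} [Fintype Y] (M : Matrix (X × (Y × Z)) (X × (Y × Z)) ℂ) :
    Matrix (X × Z) (X × Z) ℂ :=
  fun p q => ∑ y, M (p.1, (y, p.2)) (q.1, (y, q.2))

/-- `(F^{AA'})^b`: the swap operator if `b = true`, the identity otherwise. -/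
def swapPow (A : Type*) [Fintype A] [DecidableEq A] (b : Bool) : Matrix (A × A) (A × A) ℂ :=
  if b then swapOp A else 1

/-- `I_S ⊗ V` for a rectangular matrix `V`. -/
def idTensor {S α β : Type*} [DecidableEq S] (V : Matrix α β ℂ) :
    Matrix (S × α) (S × β) ℂ := fun p q => if p.1 = q.1 then V p.2 q.2 else 0

/-- `Ω^{A'A''} ⊗ Δ^{B'B''}` rearranged as an operator on `(A''⊗B'') ⊗ (A'⊗B')`. -/
def pairState {A A' B B' : Type*} (Ω : Matrix (A' × A) (A' × A) ℂ)
    (Δ : Matrix (B' × B) (B' × B) ℂ) :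
    Matrix ((A × B) × (A' × B')) ((A × B) × (A' × B')) ℂ :=
  fun p q => Ω (p.2.1, p.1.1) (q.2.1, q.1.1) * Δ (p.2.2, p.1.2) (q.2.2, q.1.2)

/-- interleave two bipartite operators on `A⊗X` and `B⊗Y` as an operator on
`(A⊗B) ⊗ (X⊗Y)`. -/
def arrange2 {A B X Y : Type*} (M : Matrix (A × X) (A × X) ℂ) (N : Matrix (B × Y) (B × Y) ℂ) :
    Matrix ((A × B) × (X × Y)) ((A × B) × (X × Y)) ℂ :=
  fun p q => M (p.1.1, p.2.1) (q.1.1, q.2.1) * N (p.1.2, p.2.2) (q.1.2, q.2.2)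

/-- conjugate the first factor of a bipartite operator by a rectangular matrix `U : A → A'`. -/
def encApply {A A' X : Type*} [Fintype A] (U : Matrix A' A ℂ) (M : Matrix (A × X) (A × X) ℂ) :
    Matrix (A' × X) (A' × X) ℂ :=
  fun p q => ∑ a, ∑ a', U p.1 a * M (a, p.2) (a', q.2) * star (U q.1 a')

section Pi

variable {k : ℕ} {a : Fin k → Type*} [∀ i, Fintype (a i)] [∀ i, DecidableEq (a i)]

/-- Tensor product of `k` matrices. -/
def piKron (U : ∀ i, Matrix (a i) (a i) ℂ) : Matrix (∀ i, a i) (∀ i, a i) ℂ :=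
  fun f g => ∏ i, U i (f i) (g i)

/-- merge assignments on the `true` and `false` fibers of a bit string into a full assignment. -/
def bmerge (b : Fin k → Bool) (f : (i : {i // b i = true}) → a i.1)
    (g : (i : {i // b i = false}) → a i.1) (i : Fin k) : a i :=
  if h : b i = true then f ⟨i, h⟩ else g ⟨i, by simpa using h⟩

/-- marginal of an operator on `(⊗ᵢ Aᵢ) ⊗ E` on the subsystem
`(⊗_{i : bᵢ = 1} Aᵢ) ⊗ E` selected by a bit string `b`. -/
def margB {E : Type*} (b : Fin k → Bool)
    (M : Matrix ((∀ i, a i) × E) ((∀ i, a i) × E) ℂ) :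
    Matrix (((i : {i // b i = true}) → a i.1) × E) (((i : {i // b i = true}) → a i.1) × E) ℂ :=
  fun p q => ∑ g : (i : {i // b i = false}) → a i.1,
    M (bmerge b p.1 g, p.2) (bmerge b q.1 g, q.2)

/-- `⊗ᵢ (F^{AᵢAᵢ'})^{bᵢ}` as an operator on `(⊗ᵢAᵢ) ⊗ (⊗ᵢAᵢ')`. -/
def swapProd (b : Fin k → Bool) :
    Matrix ((∀ i, a i) × (∀ i, a i)) ((∀ i, a i) × (∀ i, a i)) ℂ :=
  fun p q => ∏ i, if b i
    then (if p.1 i = q.2 i ∧ p.2 i = q.1 i then (1 : ℂ) else 0)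
    else (if p.1 i = q.1 i ∧ p.2 i = q.2 i then (1 : ℂ) else 0)

end Pi

/-- Tensor product `S ⊗ T` of two superoperators. -/
def tensorSup {α β α' β' : Type*} [Fintype α] [DecidableEq α] [Fintype α'] [DecidableEq α']
    (S : Matrix α α ℂ → Matrix β β ℂ) (T : Matrix α' α' ℂ → Matrix β' β' ℂ)
    (M : Matrix (α × α') (α × α') ℂ) : Matrix (β × β') (β × β') ℂ :=
  fun p q => ∑ x : α, ∑ y : α, ∑ x' : α', ∑ y' : α',
    M (x, x') (y, y') * S (Matrix.single x y 1) p.1 q.1 *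
      T (Matrix.single x' y' 1) p.2 q.2

/-- Hilbert–Schmidt adjoint of a superoperator. -/
def hsAdj {A E : Type*} [Fintype A] [DecidableEq A] [Fintype E]
    (T : Matrix A A ℂ → Matrix E E ℂ) (Y : Matrix E E ℂ) : Matrix A A ℂ :=
  fun x y => star (Matrix.trace (Yᴴ * T (Matrix.single x y 1)))

end Defs

end QIT

/-!
Since `[[d,1],[1,d]]⁻¹ = (d² - 1)⁻¹ [[d,-1],[-1,d]]`, the system can be inverted explicitly:
`(d₁² - 1)(d₂² - 1) α_b = d₁d₂ (d₁d₂ w_b - d₂ w_{b⊕e₁} - d₁ w_{b⊕e₂} + w_{b⊕e₁⊕e₂})`.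
Grouping the right-hand side as `d₂ (d₁ w_b - w_{b⊕e₁}) - (d₁ w_{b⊕e₂} - w_{b⊕e₁⊕e₂})`, the
second bracket is nonnegative and the first is at most `(d₁ - 1/d₁) w_b`, by the weight bounds
for the first bit alone.
-/

section TwirlKernel

variable {R : Type*} [CommRing R]

theorem sum_bool_prod_ite_mul (d₁ d₂ : R) (f : Bool × Bool → R) (b : Bool × Bool) :
    ∑ a : Bool × Bool, (if b.1 = a.1 then d₁ else 1) * (if b.2 = a.2 then d₂ else 1) * f a
      = d₁ * d₂ * f b + d₂ * f (!b.1, b.2) + d₁ * f (b.1, !b.2) + f (!b.1, !b.2) := by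
  obtain ⟨x, y⟩ := b
  cases x <;> cases y <;> simp [Fintype.sum_prod_type] <;> ring

theorem mul_eq_of_sum_bool_prod_ite_mul {d₁ d₂ : R} {α v : Bool × Bool → R}
    (hα : ∀ b : Bool × Bool, ∑ a : Bool × Bool,
      (if b.1 = a.1 then d₁ else 1) * (if b.2 = a.2 then d₂ else 1) * α a = v b)
    (b : Bool × Bool) :
    (d₁ ^ 2 - 1) * (d₂ ^ 2 - 1) * α b
      = d₁ * d₂ * v b - d₂ * v (!b.1, b.2) - d₁ * v (b.1, !b.2) + v (!b.1, !b.2) := by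
  have h₀ := hα b
  have h₁ := hα (!b.1, b.2)
  have h₂ := hα (b.1, !b.2)
  have h₁₂ := hα (!b.1, !b.2)
  rw [sum_bool_prod_ite_mul] at h₀ h₁ h₂ h₁₂
  simp only [Bool.not_not] at h₁ h₂ h₁₂
  linear_combination d₁ * d₂ * h₀ - d₂ * h₁ - d₁ * h₂ + h₁₂

end TwirlKernel

theorem mul_twirl_combination_le {K : Type*} [Field K] [LinearOrder K] [IsStrictOrderedRing K]
    {d₁ d₂ w₀ w₁ w₂ w₁₂ : K} (hd₁ : 0 < d₁) (hd₂ : 0 ≤ d₂)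
    (h₁ : w₀ / d₁ ≤ w₁) (h₁₂ : w₁₂ ≤ d₁ * w₂) :
    d₁ * (d₁ * d₂ * w₀ - d₂ * w₁ - d₁ * w₂ + w₁₂) ≤ d₂ * (d₁ ^ 2 - 1) * w₀ := by
  rw [div_le_iff₀ hd₁] at h₁
  linear_combination (mul_le_mul_of_nonneg_left h₁ hd₂) + (mul_le_mul_of_nonneg_left h₁₂ hd₁.le)

theorem two_sender_twirl_coeff_bounds_general (d₁ d₂ : ℕ) (hd₁ : 2 ≤ d₁) (hd : d₁ ≤ d₂)
    (w : Bool × Bool → ℝ)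
    (hw1 : ∀ b : Bool × Bool,
      w b / (d₁ : ℝ) ≤ w (!b.1, b.2) ∧ w (!b.1, b.2) ≤ (d₁ : ℝ) * w b)
    (α : Bool × Bool → ℝ)
    (hα : ∀ b : Bool × Bool,
      ((d₁ : ℝ) * (d₂ : ℝ)) * ∑ a : Bool × Bool,
          (if b.1 = a.1 then (d₁ : ℝ) else 1) * (if b.2 = a.2 then (d₂ : ℝ) else 1) * α a
        = (d₁ : ℝ) ^ 2 * (d₂ : ℝ) ^ 2 * w b) :
    ∀ b : Bool × Bool, α b ≤ ((d₂ : ℝ) ^ 2 / ((d₂ : ℝ) ^ 2 - 1)) * w b := by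
  intro b
  have hd₁' : (2 : ℝ) ≤ d₁ := by exact_mod_cast hd₁
  have hd₂' : (2 : ℝ) ≤ d₂ := by exact_mod_cast hd₁.trans hd
  have hd₁d₂ : (d₁ : ℝ) * d₂ ≠ 0 := by positivity
  have hsum : ∀ b : Bool × Bool, ∑ a : Bool × Bool,
      (if b.1 = a.1 then (d₁ : ℝ) else 1) * (if b.2 = a.2 then (d₂ : ℝ) else 1) * α a
        = d₁ * d₂ * w b :=
    fun b => mul_left_cancel₀ hd₁d₂ ((hα b).trans (by ring))
  have hinv := mul_eq_of_sum_bool_prod_ite_mul hsum b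
  have hcomb := mul_twirl_combination_le (d₂ := (d₂ : ℝ)) (by positivity) (by positivity)
    (hw1 b).1 (hw1 (b.1, !b.2)).2
  have hpos₁ : (0 : ℝ) < d₁ ^ 2 - 1 := by nlinarith
  have hpos₂ : (0 : ℝ) < d₂ ^ 2 - 1 := by nlinarith
  rw [div_mul_eq_mul_div, le_div_iff₀ hpos₂]
  refine le_of_mul_le_mul_left ?_ hpos₁
  linear_combination hinv + (d₂ : ℝ) * hcomb

/-- Coefficient bounds for the two-sender twirl: if
`(α_b)_{b ∈ {0,1}²}` solves the linear system
`d₁d₂ · Σ_a d₁^{¬(b₁⊕a₁)} d₂^{¬(b₂⊕a₂)} α_a = d₁²d₂² w_b` for weights `w` satisfying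
`w_b/dᵢ ≤ w_{b⊕eᵢ} ≤ dᵢ·w_b`, and `2 ≤ d₁ ≤ d₂`, then `α_b ≤ (d₂²/(d₂²-1))·w_b`. -/
theorem two_sender_twirl_coeff_bounds (d₁ d₂ : ℕ) (hd₁ : 2 ≤ d₁) (hd : d₁ ≤ d₂)
    (w : Bool × Bool → ℝ) (hw0 : ∀ b, 0 ≤ w b)
    (hw1 : ∀ b : Bool × Bool,
      w b / (d₁ : ℝ) ≤ w (!b.1, b.2) ∧ w (!b.1, b.2) ≤ (d₁ : ℝ) * w b)
    (hw2 : ∀ b : Bool × Bool,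
      w b / (d₂ : ℝ) ≤ w (b.1, !b.2) ∧ w (b.1, !b.2) ≤ (d₂ : ℝ) * w b)
    (α : Bool × Bool → ℝ)
    (hα : ∀ b : Bool × Bool,
      ((d₁ : ℝ) * (d₂ : ℝ)) * ∑ a : Bool × Bool,
          (if b.1 = a.1 then (d₁ : ℝ) else 1) * (if b.2 = a.2 then (d₂ : ℝ) else 1) * α a
        = (d₁ : ℝ) ^ 2 * (d₂ : ℝ) ^ 2 * w b) :
    ∀ b : Bool × Bool, α b ≤ ((d₂ : ℝ) ^ 2 / ((d₂ : ℝ) ^ 2 - 1)) * w b :=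
  two_sender_twirl_coeff_bounds_general d₁ d₂ hd₁ hd w hw1 α hα
end
end

section
/- Let ω be a positive semidefinite operator on Â₀⊗…⊗Â_{k−1}⊗E, where each Â_i and E are finite-dimensional complex Hilbert spaces. Then for all bit strings a, c ∈ {0,1}^k: (∏_{i} |Â_i|^{¬c_i}) · Tr[(ω^{Â^{a⊕c} E})²] ≤ (∏_{i} |Â_i|) · Tr[(ω^{Â^{a} E})²], where for a bit string b, Â^b denotes the subsystem consisting of those Â_i with b_i = 1 and ω^{Â^b E} is the corresponding marginal of ω. -/
/-!
Tracing out a factor `D` of an operator `σ` on `D ⊗ R` changes the purity `Tr[σ²]` by at most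
the factor `|D|` in either direction: `Tr[(Tr_D σ)²] ≤ |D| Tr[σ²]` for Hermitian `σ`, and
`Tr[σ²] ≤ |D| Tr[(Tr_D σ)²]` for `σ ≥ 0`. Both are seen blockwise, by averaging the cross terms
`Tr[σ_dd σ_d'd']` (resp. the Gram terms `Tr[G_d G_d']` of `σ = BᴴB`) against the diagonal ones.
Pass from `ω^{Â^{a⊕c}E}` up to `ω^{Â^{a∨c}E}`, which costs the dimensions of the `Âᵢ` with
`aᵢ = cᵢ = 1`, and then down to `ω^{Â^a E}`, which costs those with `cᵢ = 1, aᵢ = 0`; with the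
prefactor over `cᵢ = 0` every `|Âᵢ|` occurs exactly once.
-/

open scoped Kronecker ComplexOrder
open MeasureTheory Matrix

noncomputable section

section

open Finset

lemma Finset.sum_sum_le_card_mul_sum {D : Type*} [Fintype D] {f : D → D → ℝ} {t : D → ℝ}
    (h : ∀ d d', f d d' ≤ (t d + t d') / 2) :
    ∑ d, ∑ d', f d d' ≤ Fintype.card D * ∑ d, t d := by
  calc ∑ d, ∑ d', f d d' ≤ ∑ d, ∑ d', (t d + t d') / 2 := by gcongr with d _ d' _; exact h d d'
    _ = Fintype.card D * ∑ d, t d := by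
      simp only [add_div, sum_add_distrib, sum_const, card_univ, nsmul_eq_mul, ← sum_div,
        ← mul_sum]
      ring

lemma Finset.sum_diag_le_sum_sum {D : Type*} [Fintype D] {f : D → D → ℝ}
    (h : ∀ d d', 0 ≤ f d d') : ∑ d, f d d ≤ ∑ d, ∑ d', f d d' :=
  sum_le_sum fun d _ => single_le_sum (fun d' _ => h d d') (mem_univ d)

namespace Matrix

variable {n : Type*} [Fintype n]

lemma re_trace_mul_conjTranspose_self_nonneg {m : Type*} [Fintype m] (M : Matrix n m ℂ) :
    0 ≤ (M * Mᴴ).trace.re :=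
  (Complex.nonneg_iff.mp (posSemidef_self_mul_conjTranspose M).trace_nonneg).1

/-- Expand `0 ≤ Tr[(M - N)(M - N)ᴴ]`. -/
lemma re_trace_mul_le_of_isHermitian {M N : Matrix n n ℂ} (hM : M.IsHermitian)
    (hN : N.IsHermitian) :
    (M * N).trace.re ≤ ((M * M).trace.re + (N * N).trace.re) / 2 := by
  have h := re_trace_mul_conjTranspose_self_nonneg (M - N)
  rw [(hM.sub hN).eq, sub_mul, mul_sub, mul_sub, trace_sub, trace_sub, trace_sub,
    trace_mul_comm N M] at h
  simp only [Complex.sub_re] at h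
  linarith

end Matrix

end

namespace QIT

open Finset Matrix

def purity {n : Type*} [Fintype n] (M : Matrix n n ℂ) : ℝ := (M * M).trace.re

lemma purity_submatrix_equiv {m n : Type*} [Fintype m] [Fintype n] (M : Matrix n n ℂ)
    (e : m ≃ n) : purity (M.submatrix e e) = purity M := by
  rw [purity, purity, submatrix_mul_equiv, trace, trace]
  exact congrArg Complex.re (e.sum_comp fun i => (M * M) i i)

section Blocks

variable {D R : Type*} [Fintype D]

def block (σ : Matrix (D × R) (D × R) ℂ) (d d' : D) : Matrix R R ℂ :=
  σ.submatrix (Prod.mk d) (Prod.mk d')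

lemma ptL_eq_sum_block (σ : Matrix (D × R) (D × R) ℂ) : ptL σ = ∑ d, block σ d d := by
  ext r r'
  simp [ptL, block, Matrix.sum_apply]

variable [Fintype R]

lemma trace_mul_eq_sum_block (σ τ : Matrix (D × R) (D × R) ℂ) :
    (σ * τ).trace = ∑ d, ∑ d', (block σ d d' * block τ d' d).trace := by
  simp only [trace, Matrix.diag, mul_apply, block, submatrix_apply, Fintype.sum_prod_type]
  exact sum_congr rfl fun _ _ => sum_comm

lemma block_conjTranspose_mul_self (B : Matrix (D × R) (D × R) ℂ) (d d' : D) :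
    block (Bᴴ * B) d d' = (B.submatrix id (Prod.mk d))ᴴ * B.submatrix id (Prod.mk d') := by
  rw [block, submatrix_mul _ _ _ id _ Function.bijective_id, conjTranspose_submatrix]

lemma purity_ptL_le {σ : Matrix (D × R) (D × R) ℂ} (hσ : σ.IsHermitian) :
    purity (ptL σ) ≤ Fintype.card D * purity σ := by
  have hadj : ∀ d d', block σ d' d = (block σ d d')ᴴ := fun d d' => by
    rw [block, block, conjTranspose_submatrix, hσ.eq]
  calc purity (ptL σ)
      = ∑ d, ∑ d', (block σ d d * block σ d' d').trace.re := by
        simp only [purity, ptL_eq_sum_block, sum_mul_sum, trace_sum, Complex.re_sum]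
    _ ≤ Fintype.card D * ∑ d, (block σ d d * block σ d d).trace.re :=
        Finset.sum_sum_le_card_mul_sum fun d d' =>
          re_trace_mul_le_of_isHermitian (hσ.submatrix (Prod.mk d)) (hσ.submatrix (Prod.mk d'))
    _ ≤ Fintype.card D * purity σ := by
        gcongr
        simp only [purity, trace_mul_eq_sum_block, Complex.re_sum]
        refine Finset.sum_diag_le_sum_sum
          (f := fun d d' => (block σ d d' * block σ d' d).trace.re) fun d d' => ?_
        rw [hadj d d']
        exact re_trace_mul_conjTranspose_self_nonneg _

/-- With `σ = BᴴB` and the column blocks `C_d` of `B`, so that `σ_dd' = C_dᴴ C_d'`, the terms of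
`Tr[σ²]` are the Gram terms `Tr[G_d G_d']` of the Hermitian matrices `G_d = C_d C_dᴴ`, and the
terms `Tr[σ_dd σ_d'd']` of `Tr[(Tr_D σ)²]` are all nonnegative. -/
lemma purity_le_card_mul_purity_ptL {σ : Matrix (D × R) (D × R) ℂ} (hσ : σ.PosSemidef) :
    purity σ ≤ Fintype.card D * purity (ptL σ) := by
  classical
  obtain ⟨B, rfl⟩ : ∃ B : Matrix (D × R) (D × R) ℂ, σ = Bᴴ * B := by
    open scoped MatrixOrder in
    exact CStarAlgebra.nonneg_iff_eq_star_mul_self.mp hσ.nonneg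
  set C : D → Matrix (D × R) R ℂ := fun d => B.submatrix id (Prod.mk d)
  have hblock : ∀ d d', block (Bᴴ * B) d d' = (C d)ᴴ * C d' :=
    block_conjTranspose_mul_self B
  have hgram : ∀ d d', (block (Bᴴ * B) d d' * block (Bᴴ * B) d' d).trace
      = (C d * (C d)ᴴ * (C d' * (C d')ᴴ)).trace := fun d d' => by
    rw [hblock, hblock, ← Matrix.mul_assoc, trace_mul_comm]
    simp only [Matrix.mul_assoc]
  have hdiag : ∀ d d', (block (Bᴴ * B) d d * block (Bᴴ * B) d' d').trace
      = (C d' * (C d)ᴴ * (C d' * (C d)ᴴ)ᴴ).trace := fun d d' => by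
    rw [hblock, hblock, ← Matrix.mul_assoc, trace_mul_comm, conjTranspose_mul,
      conjTranspose_conjTranspose]
    simp only [Matrix.mul_assoc]
  calc purity (Bᴴ * B)
      = ∑ d, ∑ d', (C d * (C d)ᴴ * (C d' * (C d')ᴴ)).trace.re := by
        simp only [purity, trace_mul_eq_sum_block, hgram, Complex.re_sum]
    _ ≤ Fintype.card D * ∑ d, (C d * (C d)ᴴ * (C d * (C d)ᴴ)).trace.re :=
        Finset.sum_sum_le_card_mul_sum fun d d' => re_trace_mul_le_of_isHermitian
          (isHermitian_mul_conjTranspose_self _) (isHermitian_mul_conjTranspose_self _)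
    _ ≤ Fintype.card D * purity (ptL (Bᴴ * B)) := by
        gcongr
        simp only [purity, ← hgram, ptL_eq_sum_block, sum_mul_sum, trace_sum, Complex.re_sum]
        refine Finset.sum_diag_le_sum_sum
          (f := fun d d' => (block (Bᴴ * B) d d * block (Bᴴ * B) d' d').trace.re) fun d d' => ?_
        rw [hdiag]
        exact re_trace_mul_conjTranspose_self_nonneg _

end Blocks

lemma card_pi_subtype {ι : Type*} [Fintype ι] [DecidableEq ι] {A : ι → Type*}
    [∀ i, Fintype (A i)] (p : ι → Prop) [DecidablePred p] :
    (Fintype.card ((i : {i // p i}) → A i.1) : ℝ)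
      = ∏ i, if p i then (Fintype.card (A i) : ℝ) else 1 := by
  rw [Fintype.card_pi, Nat.cast_prod, ← prod_filter]
  exact (prod_subtype _ (mem_filter_univ (p := p)) fun i => (Fintype.card (A i) : ℝ)).symm

section Marginals

variable {k : ℕ} {A : Fin k → Type*}

def piSplitTrue (b d : Fin k → Bool) (hbd : ∀ i, b i = true → d i = true) :
    ((i : {i // d i = true}) → A i.1) ≃
      ((i : {i // d i = true ∧ b i = false}) → A i.1) × ((i : {i // b i = true}) → A i.1) where
  toFun F := (fun i => F ⟨i.1, i.2.1⟩, fun i => F ⟨i.1, hbd i.1 i.2⟩)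
  invFun fh i :=
    if h : b i.1 = true then fh.2 ⟨i.1, h⟩ else fh.1 ⟨i.1, i.2, Bool.eq_false_iff.mpr h⟩
  left_inv F := by
    funext i
    dsimp only
    split_ifs <;> rfl
  right_inv fh := by
    refine Prod.ext ?_ ?_ <;> funext i <;> dsimp only
    · rw [dif_neg (by simp [i.2.2])]
    · rw [dif_pos i.2]

def piSplitFalse (b d : Fin k → Bool) (hbd : ∀ i, b i = true → d i = true) :
    ((i : {i // b i = false}) → A i.1) ≃
      ((i : {i // d i = true ∧ b i = false}) → A i.1) × ((i : {i // d i = false}) → A i.1) where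
  toFun G := (fun i => G ⟨i.1, i.2.2⟩,
    fun i => G ⟨i.1, Bool.eq_false_iff.mpr fun h => by simpa [i.2] using hbd i.1 h⟩)
  invFun hg i :=
    if h : d i.1 = true then hg.1 ⟨i.1, h, i.2⟩ else hg.2 ⟨i.1, Bool.eq_false_iff.mpr h⟩
  left_inv G := by
    funext i
    dsimp only
    split_ifs <;> rfl
  right_inv hg := by
    refine Prod.ext ?_ ?_ <;> funext i <;> dsimp only
    · rw [dif_pos i.2.1]
    · rw [dif_neg (by simp [i.2])]

lemma bmerge_piSplitFalse_symm (b d : Fin k → Bool) (hbd : ∀ i, b i = true → d i = true)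
    (f : (i : {i // b i = true}) → A i.1)
    (h : (i : {i // d i = true ∧ b i = false}) → A i.1)
    (g : (i : {i // d i = false}) → A i.1) :
    bmerge b f ((piSplitFalse b d hbd).symm (h, g))
      = bmerge d ((piSplitTrue b d hbd).symm (h, f)) g := by
  funext i
  simp only [bmerge, piSplitFalse, piSplitTrue, Equiv.coe_fn_symm_mk]
  by_cases hb : b i = true
  · rw [dif_pos hb, dif_pos (hbd i hb), dif_pos hb]
  · by_cases hd : d i = true
    · rw [dif_neg hb, dif_pos hd, dif_pos hd, dif_neg hb]
    · rw [dif_neg hb, dif_neg hd, dif_neg hd]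

variable [∀ i, Fintype (A i)] {E : Type*}

lemma margB_eq_sum_submatrix (b : Fin k → Bool)
    (ω : Matrix ((∀ i, A i) × E) ((∀ i, A i) × E) ℂ) :
    margB b ω = ∑ g : (i : {i // b i = false}) → A i.1,
      ω.submatrix (fun p => (bmerge b p.1 g, p.2)) (fun p => (bmerge b p.1 g, p.2)) := by
  ext p q
  simp [margB, Matrix.sum_apply]

lemma margB_isHermitian {ω : Matrix ((∀ i, A i) × E) ((∀ i, A i) × E) ℂ} (hω : ω.IsHermitian)
    (b : Fin k → Bool) : (margB b ω).IsHermitian := by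
  rw [margB_eq_sum_submatrix]
  exact isSelfAdjoint_sum _ fun g _ => hω.submatrix _

lemma margB_posSemidef {ω : Matrix ((∀ i, A i) × E) ((∀ i, A i) × E) ℂ} (hω : ω.PosSemidef)
    (b : Fin k → Bool) : (margB b ω).PosSemidef := by
  rw [margB_eq_sum_submatrix]
  exact posSemidef_sum _ fun g _ => hω.submatrix _

/-- Reads a `d`-marginal index as (traced-out part on `d ∧ ¬b`, `b`-marginal index). -/
def margSplit (b d : Fin k → Bool) (hbd : ∀ i, b i = true → d i = true) :
    ((i : {i // d i = true ∧ b i = false}) → A i.1) × (((i : {i // b i = true}) → A i.1) × E) ≃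
      ((i : {i // d i = true}) → A i.1) × E :=
  (Equiv.prodAssoc _ _ E).symm.trans ((piSplitTrue b d hbd).symm.prodCongr (Equiv.refl E))

lemma margB_eq_ptL_submatrix (b d : Fin k → Bool) (hbd : ∀ i, b i = true → d i = true)
    (ω : Matrix ((∀ i, A i) × E) ((∀ i, A i) × E) ℂ) :
    margB b ω = ptL ((margB d ω).submatrix (margSplit b d hbd) (margSplit b d hbd)) := by
  ext p q
  rw [margB, ← (piSplitFalse b d hbd).symm.sum_comp, Fintype.sum_prod_type]
  simp only [bmerge_piSplitFalse_symm]
  rfl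

variable [Fintype E]

lemma purity_margB_le_of_le (b d : Fin k → Bool) (hbd : ∀ i, b i = true → d i = true)
    {ω : Matrix ((∀ i, A i) × E) ((∀ i, A i) × E) ℂ} (hω : ω.IsHermitian) :
    purity (margB b ω) ≤ (∏ i, if d i = true ∧ b i = false then (Fintype.card (A i) : ℝ) else 1)
      * purity (margB d ω) := by
  rw [← card_pi_subtype, margB_eq_ptL_submatrix b d hbd,
    ← purity_submatrix_equiv (margB d ω) (margSplit b d hbd)]
  exact purity_ptL_le ((margB_isHermitian hω d).submatrix _)

lemma purity_margB_le_of_ge (b d : Fin k → Bool) (hbd : ∀ i, b i = true → d i = true)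
    {ω : Matrix ((∀ i, A i) × E) ((∀ i, A i) × E) ℂ} (hω : ω.PosSemidef) :
    purity (margB d ω) ≤ (∏ i, if d i = true ∧ b i = false then (Fintype.card (A i) : ℝ) else 1)
      * purity (margB b ω) := by
  rw [← card_pi_subtype, margB_eq_ptL_submatrix b d hbd,
    ← purity_submatrix_equiv (margB d ω) (margSplit b d hbd)]
  exact purity_le_card_mul_purity_ptL ((margB_posSemidef hω d).submatrix _)

end Marginals

end QIT

open QIT in
theorem marginal_purity_bitstring_general {k : ℕ} {A : Fin k → Type*} [∀ i, Fintype (A i)]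
    {E : Type*} [Fintype E]
    (ω : Matrix ((∀ i, A i) × E) ((∀ i, A i) × E) ℂ) (hω : ω.PosSemidef)
    (a c : Fin k → Bool) :
    (∏ i, if c i then (1 : ℝ) else (Fintype.card (A i) : ℝ)) *
        (Matrix.trace (margB (fun i => xor (a i) (c i)) ω *
          margB (fun i => xor (a i) (c i)) ω)).re
      ≤ (∏ i, (Fintype.card (A i) : ℝ)) * (Matrix.trace (margB a ω * margB a ω)).re := by
  have hxor : ∀ i, xor (a i) (c i) = true → (a i || c i) = true := fun i => by
    cases a i <;> cases c i <;> simp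
  have ha : ∀ i, a i = true → (a i || c i) = true := fun i h => by simp [h]
  have h_xor_or := purity_margB_le_of_le _ _ hxor hω.isHermitian
  have h_or_a := purity_margB_le_of_ge _ _ ha hω
  calc _ ≤ _ * (_ * (_ * purity (margB a ω))) := by
        gcongr
        exact h_xor_or.trans (mul_le_mul_of_nonneg_left h_or_a (by positivity))
    _ = (∏ i, (Fintype.card (A i) : ℝ)) * purity (margB a ω) := by
        simp only [← mul_assoc, ← Finset.prod_mul_distrib]
        congr 1
        refine Finset.prod_congr rfl fun i _ => ?_
        cases a i <;> cases c i <;> simp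

open QIT in
/-- For a positive semidefinite `ω` on `Â₀⊗…⊗Â_{k−1}⊗E` and bit strings
`a, c ∈ {0,1}^k`:
`(∏ᵢ |Âᵢ|^{¬cᵢ}) · Tr[(ω^{Â^{a⊕c}E})²] ≤ (∏ᵢ |Âᵢ|) · Tr[(ω^{Â^{a}E})²]`. -/
theorem marginal_purity_bitstring {k : ℕ} {A : Fin k → Type*} [∀ i, Fintype (A i)]
    [∀ i, DecidableEq (A i)] {E : Type*} [Fintype E]
    (ω : Matrix ((∀ i, A i) × E) ((∀ i, A i) × E) ℂ) (hω : ω.PosSemidef)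
    (a c : Fin k → Bool) :
    (∏ i, if c i then (1 : ℝ) else (Fintype.card (A i) : ℝ)) *
        (Matrix.trace (margB (fun i => xor (a i) (c i)) ω *
          margB (fun i => xor (a i) (c i)) ω)).re
      ≤ (∏ i, (Fintype.card (A i) : ℝ)) * (Matrix.trace (margB a ω * margB a ω)).re :=
  marginal_purity_bitstring_general ω hω a c
end
end
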